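/- arXiv:0804.4305 — 2 statements merged into one kernel-verified Lean document; each statement's English description precedes it below -/
import Mathlib

section
/- Let U be an n×m real matrix with UᵀU = 1_m, V an (N−n)×m real matrix with VᵀV = 1_m, and α, β diagonal m×m matrices with α² + β² = 1_m and each commuting with the other. Then the block matrix H = [[1_n − U(1_m − α)Uᵀ, U β Vᵀ], [V β Uᵀ, 1_{N−n} − V(1_m + α)Vᵀ]] is symmetric and satisfies H² = 1_N. -/
open Matrix

private lemma sand {k l r m : ℕ} (W : Matrix (Fin k) (Fin m) ℝ)
    (X : Matrix (Fin m) (Fin m) ℝ) (Z : Matrix (Fin l) (Fin m) ℝ)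
    (hZ : Zᵀ * Z = 1) (Y : Matrix (Fin m) (Fin m) ℝ)
    (T : Matrix (Fin r) (Fin m) ℝ) :
    (W * X * Zᵀ) * (Z * Y * Tᵀ) = W * (X * Y) * Tᵀ := by
  simp only [Matrix.mul_assoc]
  rw [← Matrix.mul_assoc Zᵀ Z (Y * Tᵀ), hZ, Matrix.one_mul]

theorem block_householder_symm_involutive (n p m : ℕ)
    (U : Matrix (Fin n) (Fin m) ℝ) (hU : Uᵀ * U = 1)
    (V : Matrix (Fin p) (Fin m) ℝ) (hV : Vᵀ * V = 1)
    (α β : Matrix (Fin m) (Fin m) ℝ)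
    (hα : α.IsDiag) (hβ : β.IsDiag)
    (hαβ : α * α + β * β = 1) (hcomm : α * β = β * α) :
    let H : Matrix (Fin n ⊕ Fin p) (Fin n ⊕ Fin p) ℝ :=
      Matrix.fromBlocks (1 - U * (1 - α) * Uᵀ) (U * β * Vᵀ)
        (V * β * Uᵀ) (1 - V * (1 + α) * Vᵀ)
    H.transpose = H ∧ H * H = 1 := by
  intro H
  have hαs : αᵀ = α := hα.isSymm
  have hβs : βᵀ = β := hβ.isSymm
  have hz : (α * α + β * β) - 1 = 0 := by rw [hαβ]; exact sub_self 1
  constructor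
  · show (Matrix.fromBlocks (1 - U * (1 - α) * Uᵀ) (U * β * Vᵀ)
        (V * β * Uᵀ) (1 - V * (1 + α) * Vᵀ))ᵀ
      = Matrix.fromBlocks (1 - U * (1 - α) * Uᵀ) (U * β * Vᵀ)
        (V * β * Uᵀ) (1 - V * (1 + α) * Vᵀ)
    rw [Matrix.fromBlocks_transpose]
    simp only [transpose_sub, transpose_one, Matrix.transpose_mul,
      transpose_transpose, transpose_add, hαs, hβs, Matrix.mul_assoc]
  · show Matrix.fromBlocks (1 - U * (1 - α) * Uᵀ) (U * β * Vᵀ)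
        (V * β * Uᵀ) (1 - V * (1 + α) * Vᵀ)
      * Matrix.fromBlocks (1 - U * (1 - α) * Uᵀ) (U * β * Vᵀ)
        (V * β * Uᵀ) (1 - V * (1 + α) * Vᵀ) = 1
    rw [Matrix.fromBlocks_multiply, ← Matrix.fromBlocks_one]
    have b11 : (1 - U * (1 - α) * Uᵀ) * (1 - U * (1 - α) * Uᵀ)
        + U * β * Vᵀ * (V * β * Uᵀ) = 1 := by
      have e1 : U * β * Vᵀ * (V * β * Uᵀ) = U * (β * β) * Uᵀ := sand U β V hV β U
      have expand : (1 - U * (1 - α) * Uᵀ) * (1 - U * (1 - α) * Uᵀ)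
          = 1 - U * (1 - α) * Uᵀ - U * (1 - α) * Uᵀ
            + (U * (1 - α) * Uᵀ) * (U * (1 - α) * Uᵀ) := by noncomm_ring
      rw [expand, e1, sand U (1 - α) U hU (1 - α) U]
      have key : (1 : Matrix (Fin n) (Fin n) ℝ) - U * (1 - α) * Uᵀ - U * (1 - α) * Uᵀ
          + U * ((1 - α) * (1 - α)) * Uᵀ + U * (β * β) * Uᵀ
          = 1 + U * ((α * α + β * β) - 1) * Uᵀ := by
        simp only [Matrix.mul_sub, Matrix.sub_mul, Matrix.mul_add, Matrix.add_mul,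
          Matrix.mul_one, Matrix.one_mul, Matrix.mul_assoc]
        abel
      rw [key, hz, Matrix.mul_zero, Matrix.zero_mul, add_zero]
    have b12 : (1 - U * (1 - α) * Uᵀ) * (U * β * Vᵀ)
        + U * β * Vᵀ * (1 - V * (1 + α) * Vᵀ) = 0 := by
      have expand : (1 - U * (1 - α) * Uᵀ) * (U * β * Vᵀ)
            + U * β * Vᵀ * (1 - V * (1 + α) * Vᵀ)
          = U * β * Vᵀ - (U * (1 - α) * Uᵀ) * (U * β * Vᵀ)
            + (U * β * Vᵀ - (U * β * Vᵀ) * (V * (1 + α) * Vᵀ)) := by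
        simp only [Matrix.mul_sub, Matrix.sub_mul, Matrix.mul_add, Matrix.add_mul,
          Matrix.mul_one, Matrix.one_mul, Matrix.mul_assoc]
      rw [expand, sand U (1 - α) U hU β V, sand U β V hV (1 + α) V]
      have key : U * β * Vᵀ - U * ((1 - α) * β) * Vᵀ
          + (U * β * Vᵀ - U * (β * (1 + α)) * Vᵀ)
          = U * (α * β) * Vᵀ - U * (β * α) * Vᵀ := by
        simp only [Matrix.mul_sub, Matrix.sub_mul, Matrix.mul_add, Matrix.add_mul,
          Matrix.mul_one, Matrix.one_mul, Matrix.mul_assoc]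
        abel
      rw [key, hcomm, sub_self]
    have b21 : V * β * Uᵀ * (1 - U * (1 - α) * Uᵀ)
        + (1 - V * (1 + α) * Vᵀ) * (V * β * Uᵀ) = 0 := by
      have expand : V * β * Uᵀ * (1 - U * (1 - α) * Uᵀ)
            + (1 - V * (1 + α) * Vᵀ) * (V * β * Uᵀ)
          = V * β * Uᵀ - (V * β * Uᵀ) * (U * (1 - α) * Uᵀ)
            + (V * β * Uᵀ - (V * (1 + α) * Vᵀ) * (V * β * Uᵀ)) := by
        simp only [Matrix.mul_sub, Matrix.sub_mul, Matrix.mul_add, Matrix.add_mul,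
          Matrix.mul_one, Matrix.one_mul, Matrix.mul_assoc]
      rw [expand, sand V β U hU (1 - α) U, sand V (1 + α) V hV β U]
      have key : V * β * Uᵀ - V * (β * (1 - α)) * Uᵀ
          + (V * β * Uᵀ - V * ((1 + α) * β) * Uᵀ)
          = V * (β * α) * Uᵀ - V * (α * β) * Uᵀ := by
        simp only [Matrix.mul_sub, Matrix.sub_mul, Matrix.mul_add, Matrix.add_mul,
          Matrix.mul_one, Matrix.one_mul, Matrix.mul_assoc]
        abel
      rw [key, hcomm, sub_self]
    have b22 : V * β * Uᵀ * (U * β * Vᵀ)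
        + (1 - V * (1 + α) * Vᵀ) * (1 - V * (1 + α) * Vᵀ) = 1 := by
      have expand : (1 - V * (1 + α) * Vᵀ) * (1 - V * (1 + α) * Vᵀ)
          = 1 - V * (1 + α) * Vᵀ - V * (1 + α) * Vᵀ
            + (V * (1 + α) * Vᵀ) * (V * (1 + α) * Vᵀ) := by noncomm_ring
      rw [expand, sand V β U hU β V, sand V (1 + α) V hV (1 + α) V]
      have key : V * (β * β) * Vᵀ
          + (1 - V * (1 + α) * Vᵀ - V * (1 + α) * Vᵀ + V * ((1 + α) * (1 + α)) * Vᵀ)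
          = 1 + V * ((α * α + β * β) - 1) * Vᵀ := by
        simp only [Matrix.mul_sub, Matrix.sub_mul, Matrix.mul_add, Matrix.add_mul,
          Matrix.mul_one, Matrix.one_mul, Matrix.mul_assoc]
        abel
      rw [key, hz, Matrix.mul_zero, Matrix.zero_mul, add_zero]
    rw [b11, b12, b21, b22]
end

section
/- With U, V, α, β as in the block Householder construction (UᵀU = VᵀV = 1_m, α, β diagonal, α² + β² = 1), H can be written as H = 1_N − 2 W Wᵀ where W is the N×m block column W = [U √((1−α)/2); −V √((1+α)/2)], and W has orthonormal columns: WᵀW = 1_m. -/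
open Matrix

theorem block_householder_rank_one_form (n p m : ℕ)
    (U : Matrix (Fin n) (Fin m) ℝ) (hU : Uᵀ * U = 1)
    (V : Matrix (Fin p) (Fin m) ℝ) (hV : Vᵀ * V = 1)
    (a b : Fin m → ℝ)
    (ha₁ : ∀ i, -1 ≤ a i) (ha₂ : ∀ i, a i ≤ 1) (hb : ∀ i, 0 ≤ b i)
    (hab : ∀ i, a i ^ 2 + b i ^ 2 = 1) :
    let α : Matrix (Fin m) (Fin m) ℝ := Matrix.diagonal a
    let β : Matrix (Fin m) (Fin m) ℝ := Matrix.diagonal b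
    let H : Matrix (Fin n ⊕ Fin p) (Fin n ⊕ Fin p) ℝ :=
      Matrix.fromBlocks (1 - U * (1 - α) * Uᵀ) (U * β * Vᵀ)
        (V * β * Uᵀ) (1 - V * (1 + α) * Vᵀ)
    let W : Matrix (Fin n ⊕ Fin p) (Fin m) ℝ := fun i j =>
      Sum.elim (fun i₁ => (U * Matrix.diagonal fun k => Real.sqrt ((1 - a k) / 2)) i₁ j)
               (fun i₂ => (-(V * Matrix.diagonal fun k => Real.sqrt ((1 + a k) / 2))) i₂ j) i
    Wᵀ * W = 1 ∧ H = 1 - (2 : ℝ) • (W * Wᵀ) := by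
  intro α β H W
  set d₁ : Fin m → ℝ := fun k => Real.sqrt ((1 - a k) / 2) with hd₁
  set d₂ : Fin m → ℝ := fun k => Real.sqrt ((1 + a k) / 2) with hd₂
  have h1 : ∀ k, d₁ k * d₁ k = (1 - a k) / 2 := fun k =>
    Real.mul_self_sqrt (by linarith [ha₂ k])
  have h2 : ∀ k, d₂ k * d₂ k = (1 + a k) / 2 := fun k =>
    Real.mul_self_sqrt (by linarith [ha₁ k])
  have h12 : ∀ k, d₁ k * d₂ k = b k / 2 := by
    intro k
    have : d₁ k * d₂ k = Real.sqrt ((1 - a k) / 2 * ((1 + a k) / 2)) :=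
      (Real.sqrt_mul (by linarith [ha₂ k]) _).symm
    rw [this]
    have he : (1 - a k) / 2 * ((1 + a k) / 2) = (b k / 2) ^ 2 := by
      have := hab k; nlinarith
    rw [he, Real.sqrt_sq (by linarith [hb k])]
  set A : Matrix (Fin n) (Fin m) ℝ := U * Matrix.diagonal d₁ with hA
  set B : Matrix (Fin p) (Fin m) ℝ := -(V * Matrix.diagonal d₂) with hB
  have hW : W = fromRows A B := by
    ext (i | i) j <;> rfl
  have hAA : Aᵀ * A = Matrix.diagonal fun k => (1 - a k) / 2 := by
    rw [hA, transpose_mul, diagonal_transpose, Matrix.mul_assoc,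
      ← Matrix.mul_assoc Uᵀ, hU, Matrix.one_mul, diagonal_mul_diagonal]
    exact congrArg _ (funext h1)
  have hBB : Bᵀ * B = Matrix.diagonal fun k => (1 + a k) / 2 := by
    rw [hB, transpose_neg, Matrix.neg_mul, Matrix.mul_neg, neg_neg,
      transpose_mul, diagonal_transpose, Matrix.mul_assoc,
      ← Matrix.mul_assoc Vᵀ, hV, Matrix.one_mul, diagonal_mul_diagonal]
    exact congrArg _ (funext h2)
  have key : ∀ {q r : ℕ} (X : Matrix (Fin q) (Fin m) ℝ) (Y : Matrix (Fin r) (Fin m) ℝ)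
      (c e : Fin m → ℝ),
      (2 : ℝ) • (X * Matrix.diagonal c * (Y * Matrix.diagonal e)ᵀ)
        = X * Matrix.diagonal (fun k => 2 * (c k * e k)) * Yᵀ := by
    intro q r X Y c e
    rw [transpose_mul, diagonal_transpose, ← Matrix.mul_assoc,
      Matrix.mul_assoc X, diagonal_mul_diagonal, ← Matrix.smul_mul,
      ← Matrix.mul_smul]
    congr 1
    ext i j
    simp only [← Matrix.diagonal_smul, Matrix.mul_diagonal, Pi.smul_apply,
      smul_eq_mul]
  have hαs : (1 : Matrix (Fin m) (Fin m) ℝ) - α = Matrix.diagonal fun k => 1 - a k := by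
    rw [show α = Matrix.diagonal a from rfl, ← diagonal_one, diagonal_sub]
  have hαa : (1 : Matrix (Fin m) (Fin m) ℝ) + α = Matrix.diagonal fun k => 1 + a k := by
    rw [show α = Matrix.diagonal a from rfl, ← diagonal_one, diagonal_add]
  have e11 : (2 : ℝ) • (A * Aᵀ) = U * (1 - α) * Uᵀ := by
    rw [hA, key, hαs]
    congr 2
    refine congrArg _ (funext fun k => ?_)
    rw [h1]; ring
  have e22 : (2 : ℝ) • (B * Bᵀ) = V * (1 + α) * Vᵀ := by
    rw [hB, transpose_neg, Matrix.neg_mul, Matrix.mul_neg, neg_neg, key, hαa]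
    congr 2
    refine congrArg _ (funext fun k => ?_)
    rw [h2]; ring
  have e12 : (2 : ℝ) • (A * Bᵀ) = -(U * β * Vᵀ) := by
    rw [hA, hB, transpose_neg, Matrix.mul_neg, smul_neg, key, neg_inj]
    congr 2
    refine congrArg _ (funext fun k => ?_)
    rw [h12]; ring
  have e21 : (2 : ℝ) • (B * Aᵀ) = -(V * β * Uᵀ) := by
    rw [hA, hB, Matrix.neg_mul, smul_neg, key, neg_inj]
    congr 2
    refine congrArg _ (funext fun k => ?_)
    rw [mul_comm (d₂ k), h12]; ring
  constructor
  · rw [hW, transpose_fromRows, fromCols_mul_fromRows, hAA, hBB, diagonal_add,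
      ← diagonal_one]
    refine congrArg _ (funext fun k => ?_)
    show (1 - a k) / 2 + (1 + a k) / 2 = 1
    ring
  · rw [hW, transpose_fromRows, fromRows_mul_fromCols, fromBlocks_smul,
      e11, e12, e21, e22, ← fromBlocks_one, sub_eq_add_neg, fromBlocks_neg,
      fromBlocks_add]
    rw [neg_neg, neg_neg, zero_add, zero_add, ← sub_eq_add_neg, ← sub_eq_add_neg]
end
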